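/- Let C = 1 − I_{d×d} be the 0-1 cost matrix (c_{ij} = 1 if i ≠ j, c_{ii} = 0). For every α in the probability simplex △^d, the rescaled Sinkhorn negentropy with cost C/ε converges to the negative Gini index as ε → +∞: lim_{ε→+∞} ε · Ω_{C/ε}(α) = (1/2)(Σ_{i=1}^d α_i² − 1). -/

import Mathlib

/-!
For a coupling `p` of `α` with itself, `ε · OTcost = (1 - tr p) + 2ε · KL(p ‖ α ⊗ α)`. The product
coupling has `KL = 0` and trace `∑ αᵢ²`, so `ε · OT ≤ 1 - ∑ αᵢ²`. Conversely, the Gibbs variational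
inequality `KL(p ‖ q) ≥ ∑ p f - ∑ q (exp f - 1)` with `f = t · 1_{i = j}`, `t = 1/(2ε)`, gives
`tr p ≤ 2ε · KL + 2ε (exp t - 1) ∑ αᵢ²`, and `2ε (exp t - 1) = 1 + O(1/ε)`. Hence
`ε · OT = 1 - ∑ αᵢ² + O(1/ε)`.
-/

open Finset Real Filter

noncomputable section

/-- The probability simplex in `ℝ^d`. -/
def simplexS (d : ℕ) : Set (Fin d → ℝ) := stdSimplex ℝ (Fin d)

/-- Transport plans between `α` and `β`: nonnegative matrices with prescribed marginals,
supported where `α i * β j > 0`. -/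
def couplings {d : ℕ} (α β : Fin d → ℝ) : Set (Matrix (Fin d) (Fin d) ℝ) :=
  {p | (∀ i j, 0 ≤ p i j) ∧ (∀ i, ∑ j, p i j = α i) ∧ (∀ j, ∑ i, p i j = β j) ∧
    ∀ i j, α i * β j = 0 → p i j = 0}

/-- The entropy-regularized transport cost of a plan `p` (with the convention `0 log 0 = 0`,
which holds automatically since `Real.log 0 = 0`). -/
def OTcost {d : ℕ} (C : Matrix (Fin d) (Fin d) ℝ) (ε : ℝ) (α β : Fin d → ℝ)
    (p : Matrix (Fin d) (Fin d) ℝ) : ℝ :=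
  (∑ i, ∑ j, p i j * C i j) + ε * ∑ i, ∑ j, p i j * Real.log (p i j / (α i * β j))

/-- Entropy-regularized optimal transport cost `OT_{C,ε}(α,β)`. -/
def OT {d : ℕ} (C : Matrix (Fin d) (Fin d) ℝ) (ε : ℝ) (α β : Fin d → ℝ) : ℝ :=
  sInf (OTcost C ε α β '' couplings α β)

/-- The Sinkhorn negentropy `Ω_C(α) = -(1/2) OT_{C,2}(α,α)`. -/
def Omega {d : ℕ} (C : Matrix (Fin d) (Fin d) ℝ) (α : Fin d → ℝ) : ℝ :=
  -(1 / 2) * OT C 2 α α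

def relEntropy {d : ℕ} (p : Matrix (Fin d) (Fin d) ℝ) (α β : Fin d → ℝ) : ℝ :=
  ∑ i, ∑ j, p i j * log (p i j / (α i * β j))

def zeroOneCost (d : ℕ) (ε : ℝ) : Matrix (Fin d) (Fin d) ℝ :=
  Matrix.of fun i j => (if i = j then 0 else 1) / ε

/-- Pointwise form of the Gibbs variational inequality, from `log x ≤ x - 1` at
`x = q * exp f / p`. -/
lemma mul_add_sub_mul_exp_le_mul_log_div {p q : ℝ} (f : ℝ) (hp : 0 ≤ p) (hq : 0 ≤ q)
    (hpq : q = 0 → p = 0) : p * f + p - q * exp f ≤ p * log (p / q) := by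
  rcases hp.eq_or_lt with rfl | hp
  · simp only [zero_mul, zero_add, zero_sub, neg_nonpos]
    positivity
  have hq : 0 < q := hq.lt_of_ne fun h => hp.ne' (hpq h.symm)
  have hlog := log_le_sub_one_of_pos (by positivity : 0 < q * exp f / p)
  rw [log_div (by positivity) hp.ne', log_mul hq.ne' (exp_pos f).ne', log_exp] at hlog
  rw [log_div hp.ne' hq.ne']
  have hmul : p * (log q + f - log p) ≤ q * exp f - p :=
    calc p * (log q + f - log p) ≤ p * (q * exp f / p - 1) :=
          mul_le_mul_of_nonneg_left hlog hp.le
      _ = q * exp f - p := by field_simp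
  linarith

section ZeroOneCost

variable {d : ℕ} {α β : Fin d → ℝ} {p : Matrix (Fin d) (Fin d) ℝ}

lemma sum_sum_eq_one_of_mem_couplings (hα : α ∈ simplexS d) (hp : p ∈ couplings α β) :
    ∑ i, ∑ j, p i j = 1 := by
  simp only [hp.2.1, hα.2]

lemma vecMulVec_mem_couplings (hα : α ∈ simplexS d) (hβ : β ∈ simplexS d) :
    Matrix.vecMulVec α β ∈ couplings α β := by
  refine ⟨fun i j => mul_nonneg (hα.1 i) (hβ.1 j), fun i => ?_, fun j => ?_, fun i j h => h⟩
  · simp [Matrix.vecMulVec_apply, ← mul_sum, hβ.2]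
  · simp [Matrix.vecMulVec_apply, ← sum_mul, hα.2]

lemma relEntropy_vecMulVec : relEntropy (Matrix.vecMulVec α β) α β = 0 := by
  refine sum_eq_zero fun i _ => sum_eq_zero fun j _ => ?_
  rw [Matrix.vecMulVec_apply]
  by_cases h : α i * β j = 0
  · rw [h, zero_mul]
  · rw [div_self h, log_one, mul_zero]

lemma mul_trace_sub_le_relEntropy (hα : α ∈ simplexS d) (hβ : β ∈ simplexS d)
    (hp : p ∈ couplings α β) (t : ℝ) :
    t * ∑ i, p i i - (exp t - 1) * ∑ i, α i * β i ≤ relEntropy p α β := by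
  have hmass := sum_sum_eq_one_of_mem_couplings hα hp
  obtain ⟨hp0, -, -, hsupp⟩ := hp
  have hpoint : ∀ i j, (p i j - α i * β j) +
      (if i = j then t * p i i - (exp t - 1) * (α i * β i) else 0) ≤
      p i j * log (p i j / (α i * β j)) := by
    intro i j
    have hq := mul_nonneg (hα.1 i) (hβ.1 j)
    split_ifs with h
    · subst h
      linarith [mul_add_sub_mul_exp_le_mul_log_div t (hp0 i i) hq (hsupp i i)]
    · simpa using mul_add_sub_mul_exp_le_mul_log_div 0 (hp0 i j) hq (hsupp i j)
  have hsum := sum_le_sum fun i (_ : i ∈ univ) => sum_le_sum fun j (_ : j ∈ univ) => hpoint i j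
  simp only [sum_add_distrib, sum_sub_distrib, sum_ite_eq, mem_univ, if_true, hmass,
    ← mul_sum, ← sum_mul, hα.2, hβ.2] at hsum
  simpa [relEntropy, mul_sum] using hsum

lemma OTcost_zeroOneCost (ε η : ℝ) (hrow : ∀ i, ∑ j, p i j = α i) :
    OTcost (zeroOneCost d ε) η α β p =
      (∑ i, α i - ∑ i, p i i) / ε + η * relEntropy p α β := by
  have hrow_cost : ∀ i, ∑ j, p i j * zeroOneCost d ε i j = (α i - p i i) / ε := by
    intro i
    simp only [zeroOneCost, Matrix.of_apply, mul_div_assoc', ← sum_div, mul_ite, mul_zero,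
      mul_one]
    rw [← hrow i, ← add_sum_erase _ _ (mem_univ i),
      sum_ite_of_false fun j hj => (ne_of_mem_erase hj).symm]
    simp
  simp only [OTcost, relEntropy, hrow_cost, ← sum_div, sum_sub_distrib]

lemma le_OTcost_zeroOneCost (hα : α ∈ simplexS d) (hβ : β ∈ simplexS d) {η : ℝ} (hη : 0 < η)
    (ε : ℝ) (hp : p ∈ couplings α β) :
    1 / ε - η * (exp (1 / (η * ε)) - 1) * ∑ i, α i * β i ≤
      OTcost (zeroOneCost d ε) η α β p := by
  have hK := mul_trace_sub_le_relEntropy hα hβ hp (1 / (η * ε))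
  rw [OTcost_zeroOneCost ε η hp.2.1, hα.2]
  have hscale : η * (1 / (η * ε) * ∑ i, p i i) = (∑ i, p i i) / ε := by
    rw [← mul_assoc, mul_one_div, div_mul_cancel_left₀ hη.ne', div_eq_inv_mul]
  have hηK := mul_le_mul_of_nonneg_left hK hη.le
  rw [mul_sub, hscale] at hηK
  rw [sub_div]
  linarith

lemma OT_zeroOneCost_bddBelow (hα : α ∈ simplexS d) (hβ : β ∈ simplexS d) {η : ℝ} (hη : 0 < η)
    (ε : ℝ) : BddBelow (OTcost (zeroOneCost d ε) η α β '' couplings α β) := by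
  refine ⟨1 / ε - η * (exp (1 / (η * ε)) - 1) * ∑ i, α i * β i, ?_⟩
  rintro _ ⟨p, hp, rfl⟩
  exact le_OTcost_zeroOneCost hα hβ hη ε hp

lemma OT_zeroOneCost_le (hα : α ∈ simplexS d) (hβ : β ∈ simplexS d) {η : ℝ} (hη : 0 < η)
    (ε : ℝ) : OT (zeroOneCost d ε) η α β ≤ (1 - ∑ i, α i * β i) / ε := by
  have hq := vecMulVec_mem_couplings hα hβ
  calc OT (zeroOneCost d ε) η α β ≤ OTcost (zeroOneCost d ε) η α β (Matrix.vecMulVec α β) :=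
        csInf_le (OT_zeroOneCost_bddBelow hα hβ hη ε) ⟨_, hq, rfl⟩
    _ = (1 - ∑ i, α i * β i) / ε := by
        simp [OTcost_zeroOneCost ε η hq.2.1, relEntropy_vecMulVec, Matrix.vecMulVec_apply, hα.2]

lemma le_OT_zeroOneCost (hα : α ∈ simplexS d) (hβ : β ∈ simplexS d) {η : ℝ} (hη : 0 < η)
    (ε : ℝ) :
    1 / ε - η * (exp (1 / (η * ε)) - 1) * ∑ i, α i * β i ≤ OT (zeroOneCost d ε) η α β := by
  refine le_csInf ⟨_, _, vecMulVec_mem_couplings hα hβ, rfl⟩ ?_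
  rintro _ ⟨p, hp, rfl⟩
  exact le_OTcost_zeroOneCost hα hβ hη ε hp

lemma neg_gini_le_mul_Omega_zeroOneCost (hα : α ∈ simplexS d) {ε : ℝ} (hε : 0 < ε) :
    (1 / 2) * ((∑ i, α i ^ 2) - 1) ≤ ε * Omega (zeroOneCost d ε) α := by
  have h := mul_le_mul_of_nonneg_left (OT_zeroOneCost_le hα hα two_pos ε) hε.le
  rw [mul_div_cancel₀ _ hε.ne'] at h
  simp only [Omega, ← sq] at h ⊢
  linarith

lemma mul_Omega_zeroOneCost_le (hα : α ∈ simplexS d) {ε : ℝ} (hε : 1 / 2 ≤ ε) :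
    ε * Omega (zeroOneCost d ε) α ≤
      (1 / 2) * ((∑ i, α i ^ 2) - 1) + (∑ i, α i ^ 2) / (4 * ε) := by
  have hε0 : 0 < ε := by linarith
  have h := mul_le_mul_of_nonneg_left (le_OT_zeroOneCost hα hα two_pos ε) hε0.le
  rw [mul_sub, mul_one_div_cancel hε0.ne'] at h
  set x := 1 / (2 * ε) with hx_def
  have hx : |x| ≤ 1 := by
    rw [abs_of_pos (by positivity), div_le_one (by positivity)]
    linarith
  have hgrowth : ε * (exp x - 1) ≤ 1 / 2 + 1 / (4 * ε) :=
    calc ε * (exp x - 1) ≤ ε * (x + x ^ 2) := by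
          have := (abs_le.1 (abs_exp_sub_one_sub_id_le hx)).2
          exact mul_le_mul_of_nonneg_left (by linarith) hε0.le
      _ = 1 / 2 + 1 / (4 * ε) := by rw [hx_def]; field_simp; ring
  have hS : 0 ≤ ∑ i, α i ^ 2 := sum_nonneg fun i _ => sq_nonneg _
  simp only [Omega, ← sq] at h ⊢
  linarith [mul_le_mul_of_nonneg_right hgrowth hS, div_eq_mul_one_div (∑ i, α i ^ 2) (4 * ε)]

end ZeroOneCost

theorem sinkhorn_negentropy_limit_gini (d : ℕ)
    (α : Fin d → ℝ) (hα : α ∈ simplexS d) :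
    Filter.Tendsto
      (fun ε : ℝ =>
        ε * Omega (Matrix.of fun i j : Fin d => (if i = j then (0 : ℝ) else 1) / ε) α)
      Filter.atTop (nhds ((1 / 2) * ((∑ i, (α i) ^ 2) - 1))) := by
  have hbound : Tendsto (fun ε : ℝ => (1 / 2) * ((∑ i, α i ^ 2) - 1) + (∑ i, α i ^ 2) / (4 * ε))
      atTop (nhds ((1 / 2) * ((∑ i, α i ^ 2) - 1))) := by
    simpa using tendsto_const_nhds.add
      (tendsto_const_nhds.div_atTop (tendsto_id.const_mul_atTop (by norm_num : (0 : ℝ) < 4)))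
  refine tendsto_of_tendsto_of_tendsto_of_le_of_le' tendsto_const_nhds hbound ?_ ?_
  · filter_upwards [eventually_gt_atTop 0] with ε hε
    exact neg_gini_le_mul_Omega_zeroOneCost hα hε
  · filter_upwards [eventually_ge_atTop (1 / 2)] with ε hε
    exact mul_Omega_zeroOneCost_le hα hε
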